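/- arXiv:math/0701651 — 4 statements merged into one kernel-verified Lean document; each statement's English description precedes it below -/
import Mathlib

section
/- In a best-of-5 series under the 2-2-1 format (home, home, road, road, home), the probability that the team with home-field advantage wins the series equals (3r²+6r+1)p³ − (9r²+6r)p⁴ + 6r²p⁵, the same as under the 2-3 format. -/
open Finset

/-- Per-game win probability for the team with home-field advantage:
`p` for a home game, `r*p` for a road game. -/
def gameProb (p r : ℝ) (home : Bool) : ℝ := if home then p else r * p

/-- Probability of a full sequence of outcomes `ω` (`true` = the team wins that game),
given the home/road schedule `sched` (`true` = home game), with games independent. -/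
def outcomeProb {n : ℕ} (p r : ℝ) (sched : Fin n → Bool) (ω : Fin n → Bool) : ℝ :=
  ∏ i, if ω i then gameProb p r (sched i) else 1 - gameProb p r (sched i)

/-- Probability that the team wins at least `k` of the `n` games; for a best-of-`n`
series (`n = 2k-1`) this equals the probability of winning the series, since the
series is decided as soon as one team reaches `k` wins. -/
def seriesWinProb {n : ℕ} (p r : ℝ) (sched : Fin n → Bool) (k : ℕ) : ℝ :=
  ∑ ω ∈ Finset.univ.filter
      (fun ω : Fin n → Bool => k ≤ (Finset.univ.filter (fun i => ω i = true)).card),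
    outcomeProb p r sched ω

/-!
Winning at least three of the five games does not depend on the order in which they are played,
so `seriesWinProb` is invariant under permuting the schedule; the 2-3 schedule is a permutation
of the 2-2-1 one (three home games, two road games). Conditioning on the first game gives the
recursion `S(h :: s, k + 1) = q S(s, k) + (1 - q) S(s, k + 1)` with `q` the win probability of
that game, which evaluates the 2-2-1 probability to the stated polynomial.
-/

lemma sum_pi_fin_succ {α M : Type*} [Fintype α] [AddCommMonoid M] {n : ℕ}
    (f : (Fin (n + 1) → α) → M) : ∑ ω, f ω = ∑ a, ∑ ω : Fin n → α, f (Fin.cons a ω) := by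
  rw [← (Fin.consEquiv fun _ => α).sum_comp, Fintype.sum_prod_type]
  rfl

lemma outcomeProb_cons {n : ℕ} (p r : ℝ) (h : Bool) (s : Fin n → Bool) (b : Bool)
    (ω : Fin n → Bool) :
    outcomeProb p r (Fin.cons h s) (Fin.cons b ω) =
      (if b then gameProb p r h else 1 - gameProb p r h) * outcomeProb p r s ω := by
  simp only [outcomeProb, Fin.prod_univ_succ, Fin.cons_zero, Fin.cons_succ]

lemma card_filter_cons {n : ℕ} (b : Bool) (ω : Fin n → Bool) :
    #{i | (Fin.cons b ω : Fin (n + 1) → Bool) i = true} =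
      (if b then 1 else 0) + #{i | ω i = true} := by
  simp only [card_filter, Fin.sum_univ_succ, Fin.cons_zero, Fin.cons_succ]

lemma sum_outcomeProb_eq_one {n : ℕ} (p r : ℝ) (sched : Fin n → Bool) :
    ∑ ω, outcomeProb p r sched ω = 1 := by
  simp only [outcomeProb]
  rw [← Fintype.prod_sum (fun i (b : Bool) =>
    if b then gameProb p r (sched i) else 1 - gameProb p r (sched i))]
  simp

lemma seriesWinProb_zero {n : ℕ} (p r : ℝ) (sched : Fin n → Bool) :
    seriesWinProb p r sched 0 = 1 := by
  simp [seriesWinProb, sum_outcomeProb_eq_one]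

lemma seriesWinProb_fin_zero_succ (p r : ℝ) (sched : Fin 0 → Bool) (k : ℕ) :
    seriesWinProb p r sched (k + 1) = 0 := by
  simp [seriesWinProb]

lemma seriesWinProb_cons_succ {n : ℕ} (p r : ℝ) (h : Bool) (s : Fin n → Bool) (k : ℕ) :
    seriesWinProb p r (Fin.cons h s) (k + 1) =
      gameProb p r h * seriesWinProb p r s k +
        (1 - gameProb p r h) * seriesWinProb p r s (k + 1) := by
  simp only [seriesWinProb, sum_filter, sum_pi_fin_succ, Fintype.sum_bool, outcomeProb_cons,
    card_filter_cons, if_true, Bool.false_eq_true, if_false, zero_add, add_comm 1,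
    add_le_add_iff_right, mul_sum, mul_ite, mul_zero]

lemma seriesWinProb_comp_perm {n : ℕ} (p r : ℝ) (sched : Fin n → Bool)
    (σ : Equiv.Perm (Fin n)) (k : ℕ) :
    seriesWinProb p r (sched ∘ σ) k = seriesWinProb p r sched k := by
  simp only [seriesWinProb, sum_filter]
  refine Fintype.sum_equiv (σ.arrowCongr (Equiv.refl Bool)) _ _ fun ω => ?_
  have hcard : #{i | ω (σ.symm i) = true} = #{i | ω i = true} := by
    simp only [card_filter]
    exact σ.symm.sum_comp fun i => if ω i = true then 1 else 0
  have hprob : outcomeProb p r sched (ω ∘ σ.symm) = outcomeProb p r (sched ∘ σ) ω := by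
    simp only [outcomeProb, Function.comp_apply]
    rw [← Equiv.prod_comp σ]
    simp
  change _ = if k ≤ #{i | ω (σ.symm i) = true} then outcomeProb p r sched (ω ∘ σ.symm) else 0
  rw [hcard, hprob]

lemma seriesWinProb_two_two_one (p r : ℝ) :
    seriesWinProb p r ![true, true, false, false, true] 3 =
      (3*r^2 + 6*r + 1) * p^3 - (9*r^2 + 6*r) * p^4 + 6*r^2 * p^5 := by
  simp only [Matrix.vecCons, seriesWinProb_cons_succ, seriesWinProb_zero,
    seriesWinProb_fin_zero_succ, gameProb, if_true, Bool.false_eq_true, if_false]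
  ring

theorem stmt_3_general (p r : ℝ) :
    seriesWinProb p r ![true, true, false, false, true] 3 =
      (3*r^2 + 6*r + 1) * p^3 - (9*r^2 + 6*r) * p^4 + 6*r^2 * p^5 ∧
    seriesWinProb p r ![true, true, false, false, true] 3 =
      seriesWinProb p r ![false, false, true, true, true] 3 := by
  have hperm : ![false, false, true, true, true] =
      ![true, true, false, false, true] ∘
        (Equiv.swap 0 2 * Equiv.swap 1 3 : Equiv.Perm (Fin 5)) := by
    decide
  rw [hperm, seriesWinProb_comp_perm]
  exact ⟨seriesWinProb_two_two_one p r, rfl⟩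

/-- Best-of-5, 2-2-1 format (home, home, road, road, home): the team with home-field
advantage wins the series with probability `(3r²+6r+1)p³ − (9r²+6r)p⁴ + 6r²p⁵`,
the same as in the 2-3 format. -/
theorem stmt_3 (p r : ℝ) (hp0 : 0 ≤ p) (hp1 : p ≤ 1) (hr : 0 ≤ r) (hrp : r * p ≤ 1) :
    seriesWinProb p r ![true, true, false, false, true] 3 =
      (3*r^2 + 6*r + 1) * p^3 - (9*r^2 + 6*r) * p^4 + 6*r^2 * p^5 ∧
    seriesWinProb p r ![true, true, false, false, true] 3 =
      seriesWinProb p r ![false, false, true, true, true] 3 :=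
  stmt_3_general p r
end

section
/- With r = 0.894762228, there exists a unique p₀ ∈ (0,1) with f(p₀) = 0, and p₀ ∈ (0.5377, 0.5378), where f(p) = 6r²p⁵ − (9r²+6r)p⁴ + (3r²+8r+1)p³ − (2r+1)p². Moreover f(p) < 0 for p ∈ (0, p₀) and f(p) > 0 for p ∈ (p₀, 1). -/
/-!
Factor `f p = p² (p - 1) g p` with the quadratic `g p = 6r²p² - (3r² + 6r)p + (2r + 1)`.
Numerically `g` changes sign on `[0.5377, 0.5378]`, so it has a root `p₀` there; its other
root `(r + 2)/(2r) - p₀ ≈ 1.08` lies beyond `1`. Hence on `(0, 1)` we have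
`f p = (p - p₀) k p` with `k p = 6r² p² (1 - p) ((r + 2)/(2r) - p₀ - p) > 0`, which
settles uniqueness of the root and the sign of `f` on either side of it.
-/

/-- The road multiplier: the average ratio of road to home winning percentage of the
96 playoff teams of 1995–2006. -/
noncomputable def r : ℝ := 0.894762228

/-- Five-game minus three-game series win probability for the team with
home-field advantage (home win probability `p`, road win probability `r*p`). -/
noncomputable def f (p : ℝ) : ℝ := 6 * r^2 * p^5 - (9*r^2 + 6*r) * p^4 + (3*r^2 + 8*r + 1) * p^3 - (2*r + 1) * p^2

/-- Seven-game minus five-game series win probability for the team with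
home-field advantage. -/
noncomputable def s (p : ℝ) : ℝ := -20*r^3 * p^7 + (40*r^3 + 30*r^2) * p^6 - (24*r^3 + 54*r^2 + 12*r) * p^5 + (4*r^3 + 27*r^2 + 18*r + 1) * p^4 - (3*r^2 + 6*r + 1) * p^3

open Set

theorem quadratic_eq_mul_sub_mul_sub_of_root {a b c x : ℝ} (ha : a ≠ 0)
    (hx : a * x^2 + b * x + c = 0) (p : ℝ) :
    a * p^2 + b * p + c = a * (p - x) * (p - (-b / a - x)) := by
  have hab : a * (-b / a) = -b := by field_simp
  linear_combination hx + (p - x) * hab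

theorem sign_of_eq_sub_mul_pos {F k : ℝ → ℝ} {a b x₀ : ℝ} (hx₀ : x₀ ∈ Icc a b)
    (hk : ∀ q ∈ Ioo a b, 0 < k q) (hF : ∀ q ∈ Ioo a b, F q = (q - x₀) * k q) :
    (∀ q ∈ Ioo a b, F q = 0 → q = x₀) ∧
    (∀ q ∈ Ioo a x₀, F q < 0) ∧
    (∀ q ∈ Ioo x₀ b, F q > 0) := by
  refine ⟨fun q hq hFq => ?_, fun q hq => ?_, fun q hq => ?_⟩
  · rw [hF q hq] at hFq
    exact sub_eq_zero.mp ((mul_eq_zero.mp hFq).resolve_right (hk q hq).ne')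
  · have hq' : q ∈ Ioo a b := ⟨hq.1, hq.2.trans_le hx₀.2⟩
    rw [hF q hq']
    exact mul_neg_of_neg_of_pos (sub_neg.mpr hq.2) (hk q hq')
  · have hq' : q ∈ Ioo a b := ⟨hx₀.1.trans_lt hq.1, hq.2⟩
    rw [hF q hq']
    exact mul_pos (sub_pos.mpr hq.1) (hk q hq')

theorem r_pos : 0 < r := by norm_num [r]

noncomputable def fCofactor (p : ℝ) : ℝ := 6 * r^2 * p^2 - (3*r^2 + 6*r) * p + (2*r + 1)

theorem f_eq_mul_fCofactor (p : ℝ) : f p = p^2 * (p - 1) * fCofactor p := by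
  unfold f fCofactor; ring

theorem exists_fCofactor_root : ∃ p₀ ∈ Ioo (0.5377 : ℝ) 0.5378, fCofactor p₀ = 0 := by
  have hcont : ContinuousOn fCofactor (Icc 0.5377 0.5378) := by
    unfold fCofactor; fun_prop
  have hsign : (0 : ℝ) ∈ Ioo (fCofactor 0.5378) (fCofactor 0.5377) := by
    constructor <;> norm_num [fCofactor, r]
  exact intermediate_value_Ioo' (by norm_num) hcont hsign

theorem f_eq_sub_mul_of_fCofactor_root {p₀ : ℝ} (hp₀ : fCofactor p₀ = 0) (p : ℝ) :
    f p = (p - p₀) * (6 * r^2 * p^2 * (1 - p) * ((r + 2) / (2 * r) - p₀ - p)) := by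
  have hroot : 6 * r^2 * p₀^2 + -(3*r^2 + 6*r) * p₀ + (2*r + 1) = 0 := by
    rw [← hp₀, fCofactor]; ring
  have hfac := quadratic_eq_mul_sub_mul_sub_of_root (by positivity [r_pos.ne']) hroot p
  have hsum : -(-(3*r^2 + 6*r)) / (6 * r^2) = (r + 2) / (2 * r) := by
    field_simp [r_pos.ne']; ring
  rw [hsum] at hfac
  rw [f_eq_mul_fCofactor, fCofactor]
  linear_combination p^2 * (p - 1) * hfac

theorem one_lt_fCofactor_other_root {p₀ : ℝ} (hp₀ : p₀ < 0.5378) :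
    1 < (r + 2) / (2 * r) - p₀ := by
  have : (1.5378 : ℝ) < (r + 2) / (2 * r) := by
    rw [lt_div_iff₀ (mul_pos two_pos r_pos)]; norm_num [r]
  linarith

theorem stmt_9 : ∃ p₀ : ℝ, p₀ ∈ Set.Ioo (0:ℝ) 1 ∧ f p₀ = 0 ∧
    p₀ ∈ Set.Ioo (0.5377 : ℝ) 0.5378 ∧
    (∀ q ∈ Set.Ioo (0:ℝ) 1, f q = 0 → q = p₀) ∧
    (∀ q ∈ Set.Ioo (0:ℝ) p₀, f q < 0) ∧
    (∀ q ∈ Set.Ioo p₀ (1:ℝ), f q > 0) := by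
  obtain ⟨p₀, ⟨hlo, hhi⟩, hroot⟩ := exists_fCofactor_root
  have hp₀ : p₀ ∈ Ioo (0 : ℝ) 1 := ⟨by linarith, by linarith⟩
  have hother := one_lt_fCofactor_other_root hhi
  have hk : ∀ q ∈ Ioo (0 : ℝ) 1,
      0 < 6 * r^2 * q^2 * (1 - q) * ((r + 2) / (2 * r) - p₀ - q) := by
    rintro q ⟨hq0, hq1⟩
    have hr := r_pos
    exact mul_pos (mul_pos (by positivity) (by linarith)) (by linarith)
  have hf := f_eq_sub_mul_of_fCofactor_root hroot
  exact ⟨p₀, hp₀, by simp [hf], ⟨hlo, hhi⟩,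
    sign_of_eq_sub_mul_pos (Ioo_subset_Icc_self hp₀) hk fun q _ => hf q⟩
end

section
/- With r = 0.894762228, there exists a unique p₀ ∈ (0,1) with s(p₀) = 0, and p₀ ∈ (0.5337, 0.5338), where s is the seven-game minus five-game win probability difference. Moreover s(p) < 0 for p ∈ (0, p₀) and s(p) > 0 for p ∈ (p₀, 1). -/
/-!
Away from the trivial roots `0` and `1`, `s` is, up to the negative factor `-p^3 (1 - p)`, the
cubic `sCubic`. This cubic decreases on `[0, 0.7]`, changing sign between `0.5337` and `0.5338`,
and stays negative on `[0.7, 1]`, where it reaches a local minimum near `0.72` and then climbs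
to `sCubic 1 = -(1 - r)^2 (4r - 1) < 0`.
-/

open Set

noncomputable def sCubic (p : ℝ) : ℝ :=
  -20*r^3 * p^3 + (20*r^3 + 30*r^2) * p^2 - (4*r^3 + 24*r^2 + 12*r) * p + (3*r^2 + 6*r + 1)

lemma s_eq_neg_mul_sCubic (p : ℝ) : s p = -(p^3 * (1 - p)) * sCubic p := by
  unfold s sCubic; ring

lemma continuous_sCubic : Continuous sCubic := by
  unfold sCubic; fun_prop

lemma sCubic_strictAntiOn : StrictAntiOn sCubic (Icc 0 0.7) := by
  rintro x ⟨hx0, hx1⟩ y ⟨hy0, hy1⟩ hxy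
  unfold sCubic r
  nlinarith [mul_nonneg hx0 hy0, mul_pos (sub_pos.2 hxy) (sub_pos.2 hxy),
    mul_nonneg (mul_nonneg (sub_nonneg.2 hy1) (sub_nonneg.2 hx1)) (sub_pos.2 hxy).le,
    mul_nonneg (mul_nonneg (sub_nonneg.2 hy1) hy0) (sub_pos.2 hxy).le,
    mul_nonneg (mul_nonneg (sub_nonneg.2 hx1) hx0) (sub_pos.2 hxy).le]

lemma sCubic_neg_of_mem_Icc {q : ℝ} (hq : q ∈ Icc 0.7 1) : sCubic q < 0 := by
  obtain ⟨h1, h2⟩ := hq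
  unfold sCubic r
  nlinarith [mul_nonneg (sub_nonneg.2 h1) (sub_nonneg.2 h2),
    mul_nonneg (mul_nonneg (sub_nonneg.2 h1) (sub_nonneg.2 h2)) (sub_nonneg.2 h2),
    mul_nonneg (mul_nonneg (sub_nonneg.2 h1) (sub_nonneg.2 h2)) (sub_nonneg.2 h1),
    sq_nonneg (q - 0.86)]

lemma sCubic_lower_pos : 0 < sCubic 0.5337 := by
  unfold sCubic r; norm_num

lemma sCubic_upper_neg : sCubic 0.5338 < 0 := by
  unfold sCubic r; norm_num

lemma exists_sCubic_eq_zero : ∃ p₀ ∈ Ioo (0.5337 : ℝ) 0.5338, sCubic p₀ = 0 :=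
  intermediate_value_Ioo' (by norm_num) continuous_sCubic.continuousOn
    ⟨sCubic_upper_neg, sCubic_lower_pos⟩

lemma sCubic_sign {p₀ q : ℝ} (hp₀ : p₀ ∈ Icc 0 0.7) (hroot : sCubic p₀ = 0)
    (hq : q ∈ Ioo 0 1) : (q < p₀ → 0 < sCubic q) ∧ (p₀ < q → sCubic q < 0) := by
  refine ⟨fun hlt => ?_, fun hgt => ?_⟩
  · have hq' : q ∈ Icc 0 0.7 := ⟨hq.1.le, hlt.le.trans hp₀.2⟩
    simpa [hroot] using sCubic_strictAntiOn hq' hp₀ hlt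
  · rcases le_or_gt q 0.7 with hle | hgt'
    · simpa [hroot] using sCubic_strictAntiOn hp₀ ⟨hp₀.1.trans hgt.le, hle⟩ hgt
    · exact sCubic_neg_of_mem_Icc ⟨hgt'.le, hq.2.le⟩

lemma cube_mul_one_sub_pos {q : ℝ} (hq : q ∈ Ioo 0 1) : 0 < q^3 * (1 - q) :=
  mul_pos (pow_pos hq.1 3) (sub_pos.2 hq.2)

lemma s_neg_iff {q : ℝ} (hq : q ∈ Ioo 0 1) : s q < 0 ↔ 0 < sCubic q := by
  rw [s_eq_neg_mul_sCubic, neg_mul, neg_lt_zero,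
    mul_pos_iff_of_pos_left (cube_mul_one_sub_pos hq)]

lemma s_pos_iff {q : ℝ} (hq : q ∈ Ioo 0 1) : 0 < s q ↔ sCubic q < 0 := by
  rw [s_eq_neg_mul_sCubic, neg_mul, neg_pos, ← smul_eq_mul,
    smul_neg_iff_of_pos_left (cube_mul_one_sub_pos hq)]

lemma s_eq_zero_iff {q : ℝ} (hq : q ∈ Ioo 0 1) : s q = 0 ↔ sCubic q = 0 := by
  rw [s_eq_neg_mul_sCubic, neg_mul, neg_eq_zero,
    mul_eq_zero_iff_left (cube_mul_one_sub_pos hq).ne']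

theorem stmt_13 : ∃ p₀ : ℝ, p₀ ∈ Set.Ioo (0:ℝ) 1 ∧ s p₀ = 0 ∧
    p₀ ∈ Set.Ioo (0.5337 : ℝ) 0.5338 ∧
    (∀ q ∈ Set.Ioo (0:ℝ) 1, s q = 0 → q = p₀) ∧
    (∀ q ∈ Set.Ioo (0:ℝ) p₀, s q < 0) ∧
    (∀ q ∈ Set.Ioo p₀ (1:ℝ), s q > 0) := by
  obtain ⟨p₀, ⟨hlo, hhi⟩, hroot⟩ := exists_sCubic_eq_zero
  have hp₀ : p₀ ∈ Ioo (0 : ℝ) 1 := ⟨by linarith, by linarith⟩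
  have hp₀' : p₀ ∈ Icc (0 : ℝ) 0.7 := ⟨by linarith, by linarith⟩
  refine ⟨p₀, hp₀, (s_eq_zero_iff hp₀).2 hroot, ⟨hlo, hhi⟩, ?_, ?_, ?_⟩
  · intro q hq hsq
    have hcq := (s_eq_zero_iff hq).1 hsq
    obtain ⟨hleft, hright⟩ := sCubic_sign hp₀' hroot hq
    rcases lt_trichotomy q p₀ with hlt | heq | hgt
    · exact absurd hcq (hleft hlt).ne'
    · exact heq
    · exact absurd hcq (hright hgt).ne
  · intro q ⟨hq0, hqp⟩
    have hq : q ∈ Ioo (0 : ℝ) 1 := ⟨hq0, hqp.trans hp₀.2⟩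
    exact (s_neg_iff hq).2 ((sCubic_sign hp₀' hroot hq).1 hqp)
  · intro q ⟨hpq, hq1⟩
    have hq : q ∈ Ioo (0 : ℝ) 1 := ⟨hp₀.1.trans hpq, hq1⟩
    exact (s_pos_iff hq).2 ((sCubic_sign hp₀' hroot hq).2 hpq)
end

section
/- For fixed r ∈ (0,1], the best-of-5 win probability P₅(p) = (3r²+6r+1)p³ − (9r²+6r)p⁴ + 6r²p⁵ is monotonically nondecreasing in p on [0, 1]. -/
/-!
The derivative of `P₅` factors as `3p²((1 - r)² + 2r²(1 - p)² + 8r(1 - p)(1 - rp))`, and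
`1 - rp = (1 - r) + r(1 - p)`, so every term is nonnegative for `0 ≤ r ≤ 1` and `p ≤ 1`.
-/

noncomputable section

def bestOfFiveWinProb (r p : ℝ) : ℝ :=
  (3*r^2 + 6*r + 1) * p^3 - (9*r^2 + 6*r) * p^4 + 6*r^2 * p^5

def bestOfFiveWinProbDeriv (r p : ℝ) : ℝ :=
  3 * p^2 * ((1 - r)^2 + 2 * r^2 * (1 - p)^2 + 8 * r * (1 - p) * (1 - r * p))

theorem hasDerivAt_bestOfFiveWinProb (r p : ℝ) :
    HasDerivAt (bestOfFiveWinProb r) (bestOfFiveWinProbDeriv r p) p := by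
  have h3 := (hasDerivAt_pow 3 p).const_mul (3*r^2 + 6*r + 1)
  have h4 := (hasDerivAt_pow 4 p).const_mul (9*r^2 + 6*r)
  have h5 := (hasDerivAt_pow 5 p).const_mul (6*r^2)
  exact ((h3.sub h4).add h5).congr_deriv (by simp only [bestOfFiveWinProbDeriv]; ring)

theorem bestOfFiveWinProbDeriv_nonneg {r p : ℝ} (hr0 : 0 ≤ r) (hr1 : r ≤ 1) (hp1 : p ≤ 1) :
    0 ≤ bestOfFiveWinProbDeriv r p := by
  have hp : 0 ≤ 1 - p := sub_nonneg.2 hp1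
  have hrp : 0 ≤ 1 - r * p := by
    have : 1 - r * p = (1 - r) + r * (1 - p) := by ring
    rw [this]
    exact add_nonneg (sub_nonneg.2 hr1) (mul_nonneg hr0 hp)
  unfold bestOfFiveWinProbDeriv
  positivity

theorem monotoneOn_bestOfFiveWinProb {r : ℝ} (hr0 : 0 ≤ r) (hr1 : r ≤ 1) :
    MonotoneOn (bestOfFiveWinProb r) (Set.Iic 1) :=
  monotoneOn_of_hasDerivWithinAt_nonneg (convex_Iic 1)
    (fun p _ => (hasDerivAt_bestOfFiveWinProb r p).continuousAt.continuousWithinAt)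
    (fun p _ => (hasDerivAt_bestOfFiveWinProb r p).hasDerivWithinAt)
    (fun _ hp => bestOfFiveWinProbDeriv_nonneg hr0 hr1 (Set.mem_Iic.1 (interior_subset hp)))

end

/-- For fixed `r ∈ (0,1]`, the best-of-5 win probability
`P₅(p) = (3r²+6r+1)p³ − (9r²+6r)p⁴ + 6r²p⁵` is nondecreasing in `p` on `[0,1]`. -/
theorem stmt_18 (r : ℝ) (hr0 : 0 < r) (hr1 : r ≤ 1) :
    MonotoneOn (fun p : ℝ => (3*r^2 + 6*r + 1) * p^3 - (9*r^2 + 6*r) * p^4 + 6*r^2 * p^5)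
      (Set.Icc (0:ℝ) 1) :=
  (monotoneOn_bestOfFiveWinProb hr0.le hr1).mono Set.Icc_subset_Iic_self
end
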